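/- Let H and K be Hilbert spaces and let M ⊆ B(H,K) be a norm-closed subspace satisfying M M* M ⊆ M (a closed TRO). Then the closed linear span of the set {m₁ m₂* m₃ : m₁, m₂, m₃ ∈ M} equals M. -/

import Mathlib

open ContinuousLinearMap Filter Topology

/-!
For `m ∈ M` put `a = m* m` and `b = 1 - a / ‖a‖` (`gramComplement m`). Since
`m b^n - m b^(n+1) = ‖a‖⁻¹ (m b^n) m* m` and `m b^n ∈ M`, every `m - m b^n` lies in the span of
triple products. On the other hand
`‖m b^n‖² = ‖b^n a b^n‖ ≤ sup {t (1 - t/‖a‖)^(2n) : 0 ≤ t ≤ ‖a‖} ≤ ‖a‖ / (2n + 1)`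
by the continuous functional calculus, so `m b^n → 0` and `m` is in the closure of that span.
-/

theorem mul_one_sub_pow_le_one_div {s : ℝ} (hs0 : 0 ≤ s) (hs1 : s ≤ 1) (k : ℕ) :
    s * (1 - s) ^ k ≤ 1 / (k + 1) := by
  have hpow : (1 - s) ^ k ≤ Real.exp (-(k * s)) := by
    calc (1 - s) ^ k ≤ Real.exp (-s) ^ k :=
          pow_le_pow_left₀ (by linarith) (Real.one_sub_le_exp_neg s) k
      _ = Real.exp (-(k * s)) := by rw [← Real.exp_nat_mul]; ring_nf
  have hexp : Real.exp (-(k * s)) * (1 + k * s) ≤ 1 := by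
    rw [Real.exp_neg, inv_mul_le_iff₀ (Real.exp_pos _)]
    linarith [Real.add_one_le_exp (k * s)]
  rw [le_div_iff₀ (by positivity)]
  calc s * (1 - s) ^ k * (k + 1) ≤ (1 - s) ^ k * (1 + k * s) := by
        have : 0 ≤ (1 - s) ^ k := pow_nonneg (by linarith) k
        nlinarith
    _ ≤ Real.exp (-(k * s)) * (1 + k * s) := by gcongr
    _ ≤ 1 := hexp

theorem mul_one_sub_inv_mul_pow_le {R t : ℝ} (ht0 : 0 ≤ t) (htR : t ≤ R) (k : ℕ) :
    t * (1 - R⁻¹ * t) ^ k ≤ R / (k + 1) := by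
  rcases ht0.eq_or_lt with rfl | ht
  · simp only [zero_mul]; positivity
  have hR : 0 < R := ht.trans_le htR
  have hs1 : R⁻¹ * t ≤ 1 := by rwa [inv_mul_le_one₀ hR]
  calc t * (1 - R⁻¹ * t) ^ k = R * (R⁻¹ * t * (1 - R⁻¹ * t) ^ k) := by field_simp
    _ ≤ R * (1 / (k + 1)) := by gcongr; exact mul_one_sub_pow_le_one_div (by positivity) hs1 k
    _ = R / (k + 1) := by ring

section

variable {H K : Type*} [NormedAddCommGroup H] [InnerProductSpace ℂ H] [CompleteSpace H]
    [NormedAddCommGroup K] [InnerProductSpace ℂ K] [CompleteSpace K]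

noncomputable def gramComplement (m : H →L[ℂ] K) : H →L[ℂ] H :=
  1 - ‖adjoint m ∘L m‖⁻¹ • (adjoint m ∘L m)

theorem isSelfAdjoint_gramComplement (m : H →L[ℂ] K) : IsSelfAdjoint (gramComplement m) :=
  (IsSelfAdjoint.one _).sub <|
    (IsSelfAdjoint.all _).smul (isPositive_adjoint_comp_self m).isSelfAdjoint

theorem norm_le_norm_of_mem_spectrum {a : H →L[ℂ] H} {x : ℝ} (hx : x ∈ spectrum ℝ a) :
    ‖x‖ ≤ ‖a‖ := by
  have := spectrum.subset_closedBall_norm_mul a hx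
  rw [mem_closedBall_zero_iff] at this
  exact this.trans (mul_le_of_le_one_right (norm_nonneg a) norm_id_le)

theorem norm_comp_gramComplement_pow_sq_le (m : H →L[ℂ] K) (n : ℕ) :
    ‖m ∘L gramComplement m ^ n‖ ^ 2 ≤ ‖adjoint m ∘L m‖ / (2 * n + 1) := by
  set a := adjoint m ∘L m
  set R := ‖a‖
  have ha0 : 0 ≤ a := (nonneg_iff_isPositive a).mpr (isPositive_adjoint_comp_self m)
  have hb : gramComplement m ^ n = cfc (fun t : ℝ => (1 - R⁻¹ * t) ^ n) a := by
    rw [gramComplement, cfc_pow (fun t : ℝ => 1 - R⁻¹ * t) n a,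
      cfc_sub (fun _ : ℝ => (1 : ℝ)) (fun t : ℝ => R⁻¹ * t) a, cfc_const_mul_id R⁻¹ a,
      cfc_const (1 : ℝ) a, map_one]
  have hsq :
      ‖m ∘L gramComplement m ^ n‖ ^ 2 = ‖gramComplement m ^ n * a * gramComplement m ^ n‖ := by
    rw [sq, ← norm_adjoint_comp_self, adjoint_comp,
      ← star_eq_adjoint, (isSelfAdjoint_gramComplement m).pow n]
    rfl
  have hcfc : gramComplement m ^ n * a * gramComplement m ^ n
      = cfc (fun t : ℝ => (1 - R⁻¹ * t) ^ n * t * (1 - R⁻¹ * t) ^ n) a := by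
    rw [cfc_mul _ _ a, cfc_mul _ _ a, cfc_id' ℝ a, ← hb]
  rw [hsq, hcfc]
  refine norm_cfc_le (by positivity) fun t ht => ?_
  have ht0 : 0 ≤ t := spectrum_nonneg_of_nonneg ha0 ht
  have htR : t ≤ R := (Real.le_norm_self t).trans (norm_le_norm_of_mem_spectrum ht)
  have heq : (1 - R⁻¹ * t) ^ n * t * (1 - R⁻¹ * t) ^ n = t * (1 - R⁻¹ * t) ^ (2 * n) := by ring
  rw [heq, Real.norm_of_nonneg (by rw [pow_mul']; positivity)]
  exact_mod_cast mul_one_sub_inv_mul_pow_le ht0 htR (2 * n)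

theorem tendsto_comp_gramComplement_pow (m : H →L[ℂ] K) :
    Tendsto (fun n : ℕ => m ∘L gramComplement m ^ n) atTop (𝓝 0) := by
  have hsq : Tendsto (fun n : ℕ => ‖m ∘L gramComplement m ^ n‖ ^ 2) atTop (𝓝 0) := by
    refine squeeze_zero (fun _ => by positivity) (fun n => ?_)
      (by simpa using tendsto_one_div_add_atTop_nhds_zero_nat.const_mul ‖adjoint m ∘L m‖)
    calc ‖m ∘L gramComplement m ^ n‖ ^ 2 ≤ ‖adjoint m ∘L m‖ / (2 * n + 1) :=
          norm_comp_gramComplement_pow_sq_le m n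
      _ ≤ ‖adjoint m ∘L m‖ * ((n : ℝ) + 1)⁻¹ := by
          rw [← div_eq_mul_inv]; gcongr; linarith [(Nat.cast_nonneg n : (0:ℝ) ≤ n)]
  rw [tendsto_zero_iff_norm_tendsto_zero]
  simpa [Real.sqrt_sq (norm_nonneg _)] using hsq.sqrt

variable (M : Submodule ℂ (H →L[ℂ] K))

def tripleProducts : Set (H →L[ℂ] K) :=
  {x | ∃ a ∈ M, ∃ b ∈ M, ∃ c ∈ M, x = a ∘L adjoint b ∘L c}

def IsTernaryClosed : Prop :=
  ∀ a ∈ M, ∀ b ∈ M, ∀ c ∈ M, a ∘L adjoint b ∘L c ∈ M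

variable {M}

theorem span_tripleProducts_le (hTRO : IsTernaryClosed M) :
    Submodule.span ℂ (tripleProducts M) ≤ M :=
  Submodule.span_le.mpr fun _ ⟨a, ha, b, hb, c, hc, hx⟩ => hx ▸ hTRO a ha b hb c hc

theorem comp_gramComplement_eq (x : H →L[ℂ] K) (m : H →L[ℂ] K) :
    x ∘L gramComplement m = x - ‖adjoint m ∘L m‖⁻¹ • (x ∘L adjoint m ∘L m) := by
  rw [gramComplement, comp_sub, comp_smul, one_def, comp_id]

theorem sub_comp_gramComplement_mem_span {x m : H →L[ℂ] K} (hx : x ∈ M) (hm : m ∈ M) :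
    x - x ∘L gramComplement m ∈ Submodule.span ℂ (tripleProducts M) := by
  rw [comp_gramComplement_eq, sub_sub_cancel]
  exact Submodule.smul_of_tower_mem _ _ (Submodule.subset_span ⟨x, hx, m, hm, m, hm, rfl⟩)

theorem comp_gramComplement_pow_mem (hTRO : IsTernaryClosed M) {x m : H →L[ℂ] K} (hx : x ∈ M)
    (hm : m ∈ M) (n : ℕ) : x ∘L gramComplement m ^ n ∈ M := by
  induction n with
  | zero => simpa [one_def] using hx
  | succ n ih =>
    rw [pow_succ, mul_def, ← comp_assoc, comp_gramComplement_eq]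
    exact sub_mem ih (M.smul_of_tower_mem _ (hTRO _ ih m hm m hm))

theorem sub_comp_gramComplement_pow_mem_span (hTRO : IsTernaryClosed M) {m : H →L[ℂ] K}
    (hm : m ∈ M) (n : ℕ) :
    m - m ∘L gramComplement m ^ n ∈ Submodule.span ℂ (tripleProducts M) := by
  induction n with
  | zero => simp [one_def]
  | succ n ih =>
    have := sub_comp_gramComplement_mem_span (comp_gramComplement_pow_mem hTRO hm hm n) hm
    rw [pow_succ, mul_def, ← comp_assoc]
    simpa using add_mem ih this

theorem mem_closure_span_tripleProducts (hTRO : IsTernaryClosed M) {m : H →L[ℂ] K}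
    (hm : m ∈ M) :
    m ∈ closure (Submodule.span ℂ (tripleProducts M) : Set (H →L[ℂ] K)) := by
  refine mem_closure_of_tendsto (f := fun n => m - m ∘L gramComplement m ^ n) (b := atTop) ?_
    (Eventually.of_forall (sub_comp_gramComplement_pow_mem_span hTRO hm))
  simpa using (tendsto_comp_gramComplement_pow m).const_sub m

end

theorem stmt_0 {H K : Type*} [NormedAddCommGroup H] [InnerProductSpace ℂ H] [CompleteSpace H]
    [NormedAddCommGroup K] [InnerProductSpace ℂ K] [CompleteSpace K]
    (M : Submodule ℂ (H →L[ℂ] K)) (hM : IsClosed (M : Set (H →L[ℂ] K)))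
    (hTRO : ∀ a ∈ M, ∀ b ∈ M, ∀ c ∈ M, a ∘L (adjoint b) ∘L c ∈ M) :
    closure ((Submodule.span ℂ {x : H →L[ℂ] K |
        ∃ a ∈ M, ∃ b ∈ M, ∃ c ∈ M, x = a ∘L (adjoint b) ∘L c}) : Set (H →L[ℂ] K))
      = (M : Set (H →L[ℂ] K)) :=
  (closure_minimal (span_tripleProducts_le hTRO) hM).antisymm
    fun _ hm => mem_closure_span_tripleProducts hTRO hm
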